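/- arXiv:2008.04831 — 2 statements merged into one kernel-verified Lean document; each statement's English description precedes it below -/
import Mathlib

section
/- Let M be a separable metric space, (Ω, F, ℙ) a probability space, and {f_ω}_{ω∈Ω} a family of continuous maps f_ω : M → M such that (ω, x) ↦ f_ω(x) is measurable. Let C = {x ∈ M : ℙ(ω : f_ω(x) = x) = 1} and assume C ≠ M. Fix a countable basis {U_k} of open sets of M and for each k let A_{U_k} = {ω : f_ω(x) ≠ x for all x ∈ U_k}. Then for every x ∈ M \ C there exists k with x ∈ U_k and ℙ(A_{U_k}) > 0. -/
/-!
If `f ω x ≠ x`, continuity makes `{y | f ω y ≠ y}` an open neighbourhood of `x`, so it contains a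
basis element `U k ∋ x`, i.e. `ω ∈ A k`. Hence `{ω | f ω x ≠ x}` is covered by the countably many
`A k` with `x ∈ U k`; if all of them were null, `x` would be fixed almost surely, i.e. `x ∈ C`.
-/

open MeasureTheory TopologicalSpace

section FixedPoints

variable {Ω X : Type*} [TopologicalSpace X] [T2Space X] {f : Ω → X → X} {U : ℕ → Set X}

theorem setOf_apply_ne_subset_biUnion_basis (hbasis : IsTopologicalBasis (Set.range U))
    (hcont : ∀ ω, Continuous (f ω)) (x : X) :
    {ω | f ω x ≠ x} ⊆ ⋃ k ∈ {k | x ∈ U k}, {ω | ∀ y ∈ U k, f ω y ≠ y} := by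
  intro ω hω
  have hopen : IsOpen {y | f ω y ≠ y} := (isClosed_eq (hcont ω) continuous_id).isOpen_compl
  obtain ⟨_, ⟨k, rfl⟩, hxk, hk⟩ :=
    hbasis.exists_subset_of_mem_open (show x ∈ {y | f ω y ≠ y} from hω) hopen
  exact Set.mem_biUnion (x := k) hxk fun y hy => hk hy

theorem ae_apply_eq_self_of_basis_null [MeasurableSpace Ω] {μ : Measure Ω}
    (hbasis : IsTopologicalBasis (Set.range U)) (hcont : ∀ ω, Continuous (f ω)) {x : X}
    (hnull : ∀ k, x ∈ U k → μ {ω | ∀ y ∈ U k, f ω y ≠ y} = 0) :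
    ∀ᵐ ω ∂μ, f ω x = x :=
  measure_mono_null (setOf_apply_ne_subset_biUnion_basis hbasis hcont x)
    ((measure_biUnion_null_iff (Set.to_countable _)).mpr hnull)

end FixedPoints

theorem exists_basis_elt_positive_measure_general
    {Ω : Type*} [MeasurableSpace Ω] (ℙ : Measure Ω) [IsProbabilityMeasure ℙ]
    {M : Type*} [MetricSpace M]
    [MeasurableSpace M] [BorelSpace M]
    (f : Ω → M → M)
    (hmeas : Measurable (Function.uncurry f))
    (hcont : ∀ ω, Continuous (f ω))
    (C : Set M) (hCdef : C = {x : M | ℙ {ω | f ω x = x} = 1})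
    (U : ℕ → Set M)
    (hbasis : TopologicalSpace.IsTopologicalBasis (Set.range U))
    (A : ℕ → Set Ω)
    (hAdef : ∀ k, A k = {ω | ∀ x ∈ U k, f ω x ≠ x}) :
    ∀ x ∉ C, ∃ k : ℕ, x ∈ U k ∧ 0 < ℙ (A k) := by
  intro x hx
  by_contra! hnull
  have hfix : ∀ᵐ ω ∂ℙ, f ω x = x :=
    ae_apply_eq_self_of_basis_null hbasis hcont fun k hk =>
      hAdef k ▸ nonpos_iff_eq_zero.mp (hnull k hk)
  have hmeasSet : MeasurableSet {ω | f ω x = x} :=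
    hmeas.of_uncurry_right (measurableSet_singleton x)
  refine hx (hCdef ▸ ?_)
  rw [← measure_univ (μ := ℙ)]
  exact (ae_iff_measure_eq hmeasSet.nullMeasurableSet).mp hfix

/-- For a measurable family of continuous maps on a separable metric space, every
point outside the a.s.-common-fixed-point set C lies in a basis element U_k such
that with positive probability f_ω has no fixed point in U_k. -/
theorem exists_basis_elt_positive_measure
    {Ω : Type*} [MeasurableSpace Ω] (ℙ : Measure Ω) [IsProbabilityMeasure ℙ]
    {M : Type*} [MetricSpace M] [TopologicalSpace.SeparableSpace M]
    [MeasurableSpace M] [BorelSpace M]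
    (f : Ω → M → M)
    (hmeas : Measurable (Function.uncurry f))
    (hcont : ∀ ω, Continuous (f ω))
    (C : Set M) (hCdef : C = {x : M | ℙ {ω | f ω x = x} = 1})
    (hCne : C ≠ Set.univ)
    (U : ℕ → Set M)
    (hbasis : TopologicalSpace.IsTopologicalBasis (Set.range U))
    (A : ℕ → Set Ω)
    (hAdef : ∀ k, A k = {ω | ∀ x ∈ U k, f ω x ≠ x}) :
    ∀ x ∉ C, ∃ k : ℕ, x ∈ U k ∧ 0 < ℙ (A k) :=
  exists_basis_elt_positive_measure_general ℙ f hmeas hcont C hCdef U hbasis A hAdef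
end

section
/- Let (Ω, F, ℙ, θ) be an ergodic measure-preserving dynamical system, M a separable metric space in which every closed bounded set is compact, and {f_ω}_{ω∈Ω} a measurable family of paracontractions. Assume C = {x ∈ M : ℙ(ω : f_ω(x) = x) = 1} is non-empty. Then for every x ∈ M and ℙ-almost every ω, the sequence f^n_ω(x) = f_{θ^{n-1}(ω)} ∘ ⋯ ∘ f_ω(x) converges to some point of C. -/
/-!
Almost surely every map `f (θ^[n] ω)` fixes all of `C`, so for each `c ∈ C` the distance from the
orbit `xₙ` to `c` is non-increasing. Hence `xₙ` stays in a compact ball, and it converges to a point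
of `C` as soon as `infDist xₙ C` gets arbitrarily small.

If `infDist xₙ C` stayed above some `δ > 0`, the orbit would remain in a compact set `S` disjoint
from `C`. The set of `ω` along whose orbit every point of `S` is moved by some map is invariant, so
by ergodicity it is null or conull; if it were not conull, shrinking `S` around a point (by
compactness) would produce a point fixed by `f ω` for almost every `ω`, i.e. a point of `C`. So
almost surely every point of `S` is moved, and then strictly approaches `C`; compactness of `S`
makes this uniform: there is `N` such that, for a set of `ω` of positive measure, every point of `S`
gets `1 / (N + 1)` closer to `C` within `N` steps. The orbit of `ω` under `θ` visits that set
infinitely often, which would drive `infDist xₙ C` below zero.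
-/

open MeasureTheory Filter

/-- The random iteration f^n_ω = f_{θ^{n-1} ω} ∘ ⋯ ∘ f_ω. -/
def randIter {Ω M : Type*} (θ : Ω → Ω) (f : Ω → M → M) : ℕ → Ω → M → M
  | 0, _, x => x
  | n + 1, ω, x => f (θ^[n] ω) (randIter θ f n ω x)

open Set Metric Topology TopologicalSpace

def IsParacontraction {M : Type*} [MetricSpace M] (g : M → M) : Prop :=
  ∀ x y, g x = x → g y ≠ y → dist (g y) x < dist y x

namespace IsParacontraction

variable {M : Type*} [MetricSpace M] {g : M → M}

theorem dist_le (hg : IsParacontraction g) {c : M} (hc : g c = c) (y : M) :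
    dist (g y) c ≤ dist y c := by
  by_cases hy : g y = y
  · rw [hy]
  · exact (hg c y hc hy).le

theorem infDist_lt [ProperSpace M] (hg : IsParacontraction g) {C : Set M} (hC : IsClosed C)
    (hne : C.Nonempty) (hfix : ∀ c ∈ C, g c = c) {y : M} (hy : g y ≠ y) :
    infDist (g y) C < infDist y C := by
  obtain ⟨c, hc, hyc⟩ := hC.exists_infDist_eq_dist hne y
  calc infDist (g y) C ≤ dist (g y) c := infDist_le_dist_of_mem hc
    _ < dist y c := hg c y (hfix c hc) hy
    _ = infDist y C := hyc.symm

end IsParacontraction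

theorem Antitone.not_frequently_exists_le_sub {a : ℕ → ℝ} (ha : Antitone a)
    (hbdd : BddBelow (range a)) {ε : ℝ} (hε : 0 < ε) :
    ¬ ∃ᶠ n in atTop, ∃ k, a k ≤ a n - ε := by
  rw [not_frequently]
  obtain ⟨N, hN⟩ := exists_lt_of_ciInf_lt (lt_add_of_pos_right (⨅ n, a n) hε)
  filter_upwards [eventually_ge_atTop N] with n hn ⟨k, hk⟩
  linarith [ciInf_le hbdd k, ha hn]

theorem IsCompact.exists_one_div_le_of_forall_exists_pos {X : Type*} [TopologicalSpace X]
    {S : Set X} (hS : IsCompact S) {g : ℕ → X → ℝ} (hg : ∀ j, Continuous (g j))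
    (h : ∀ z ∈ S, ∃ j, 0 < g j z) :
    ∃ N : ℕ, ∀ z ∈ S, ∃ j ≤ N, 1 / ((N : ℝ) + 1) ≤ g j z := by
  let U : ℕ → Set X := fun N => {z | ∃ j ≤ N, 1 / ((N : ℝ) + 1) < g j z}
  have hU : ∀ N, IsOpen (U N) := fun N => by
    simp only [U, ofPred_exists, ofPred_and]
    exact isOpen_iUnion fun j => isOpen_const.inter (isOpen_lt continuous_const (hg j))
  have hmono : Monotone U := fun N N' hN z ⟨j, hj, hz⟩ =>
    ⟨j, hj.trans hN, lt_of_le_of_lt (by gcongr) hz⟩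
  have hcover : S ⊆ ⋃ N, U N := fun z hz => by
    obtain ⟨j, hj⟩ := h z hz
    obtain ⟨k, hk⟩ := exists_nat_one_div_lt hj
    exact mem_iUnion.2 ⟨max j k, j, le_max_left j k,
      lt_of_le_of_lt (by gcongr; exact le_max_right j k) hk⟩
  obtain ⟨N, hN⟩ := hS.elim_directed_cover U hU hcover hmono.directed_le
  exact ⟨N, fun z hz => (hN hz).imp fun j hj => ⟨hj.1, hj.2.le⟩⟩

section Fejer

variable {M : Type*} [MetricSpace M] {x : ℕ → M} {C : Set M}

theorem antitone_infDist_of_antitone_dist (hne : C.Nonempty)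
    (hx : ∀ c ∈ C, Antitone fun n => dist (x n) c) : Antitone fun n => infDist (x n) C :=
  fun _ _ hmn => (le_infDist hne).2 fun c hc => (infDist_le_dist_of_mem hc).trans (hx c hc hmn)

theorem exists_tendsto_of_antitone_dist [ProperSpace M] (hC : IsClosed C) (hne : C.Nonempty)
    (hx : ∀ c ∈ C, Antitone fun n => dist (x n) c) (hd : ∀ ε > 0, ∃ n, infDist (x n) C < ε) :
    ∃ c ∈ C, Tendsto x atTop (𝓝 c) := by
  obtain ⟨c₀, hc₀⟩ := hne
  obtain ⟨y, -, φ, hφ, hy⟩ := (isCompact_closedBall c₀ (dist (x 0) c₀)).tendsto_subseq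
    fun n => mem_closedBall.2 (hx c₀ hc₀ (Nat.zero_le n))
  have hinf : Tendsto (fun n => infDist (x n) C) atTop (𝓝 0) := by
    refine tendsto_order.2 ⟨fun a ha => .of_forall fun n => ha.trans_le infDist_nonneg,
      fun a ha => ?_⟩
    obtain ⟨N, hN⟩ := hd a ha
    exact eventually_atTop.2 ⟨N, fun n hn =>
      (antitone_infDist_of_antitone_dist ⟨c₀, hc₀⟩ hx hn).trans_lt hN⟩
  have hyC : y ∈ C := (hC.mem_iff_infDist_zero ⟨c₀, hc₀⟩).2 <|
    tendsto_nhds_unique (((continuous_infDist_pt C).tendsto y).comp hy)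
      (hinf.comp hφ.tendsto_atTop :)
  exact ⟨y, hyC, tendsto_iff_dist_tendsto_zero.2 <|
    (tendsto_iff_tendsto_subseq_of_antitone (hx y hyC) hφ.tendsto_atTop).2
      (tendsto_iff_dist_tendsto_zero.1 hy)⟩

end Fejer

section Measurability

variable {Ω X : Type*} [MeasurableSpace Ω] [TopologicalSpace X] [PseudoMetrizableSpace X]
  {S : Set X}

theorem measurableSet_setOf_forall_mem {P : Ω → X → Prop} (hS : IsSeparable S)
    (hclosed : ∀ ω, IsClosed {z | P ω z}) (hmeas : ∀ z, MeasurableSet {ω | P ω z}) :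
    MeasurableSet {ω | ∀ z ∈ S, P ω z} := by
  obtain ⟨t, htS, ht, hSt⟩ := hS.exists_countable_dense_subset
  have : {ω | ∀ z ∈ S, P ω z} = ⋂ z ∈ t, {ω | P ω z} := by
    ext ω
    simp only [mem_ofPred_eq, mem_iInter]
    exact ⟨fun h z hz => h z (htS hz),
      fun h z hz => closure_minimal h (hclosed ω) (hSt hz)⟩
  rw [this]
  exact .biInter ht fun z _ => hmeas z

theorem measurableSet_setOf_forall_mem_exists_le {G : ℕ → Ω → X → ℝ}
    (hS : IsSeparable S) (hmeas : ∀ j z, Measurable fun ω => G j ω z)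
    (hcont : ∀ j ω, Continuous (G j ω)) (N : ℕ) (ε : ℝ) :
    MeasurableSet {ω | ∀ z ∈ S, ∃ j ≤ N, ε ≤ G j ω z} := by
  refine measurableSet_setOf_forall_mem hS (fun ω => ?_) (fun z => ?_)
  · have : {z | ∃ j ≤ N, ε ≤ G j ω z} = ⋃ j ∈ {j | j ≤ N}, {z | ε ≤ G j ω z} := by
      ext z; simp
    rw [this]
    exact (finite_le_nat N).isClosed_biUnion fun j _ => isClosed_le continuous_const (hcont j ω)
  · exact measurableSet_setOfPred.2 <| Measurable.exists fun j =>
      measurable_const.and (measurableSet_setOfPred.1 (measurableSet_le measurable_const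
        (hmeas j z)))

end Measurability

theorem Ergodic.ae_frequently_mem {Ω : Type*} [MeasurableSpace Ω] {μ : Measure Ω}
    [IsFiniteMeasure μ] {θ : Ω → Ω} (hθ : Ergodic θ μ) {A : Set Ω} (hA : MeasurableSet A)
    (h : μ A ≠ 0) : ∀ᵐ ω ∂μ, ∃ᶠ n in atTop, θ^[n] ω ∈ A := by
  let B := {ω | ∃ᶠ n in atTop, θ^[n] ω ∈ A}
  have hB : MeasurableSet B := by
    convert MeasurableSet.measurableSet_limsup fun n => hθ.measurable.iterate n hA using 1
    ext ω
    simp only [B, mem_ofPred_eq, mem_limsup_iff_frequently_mem, mem_preimage]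
  have hinv : θ ⁻¹' B ⊆ B := fun ω hω => by
    simp only [B, mem_preimage, mem_ofPred_eq, ← Function.iterate_succ_apply] at hω
    exact (tendsto_add_atTop_nat 1).frequently hω
  rcases hθ.ae_empty_or_univ_of_preimage_ae_le hB.nullMeasurableSet hinv.eventuallyLE with h0 | h1
  · have hAB : A ≤ᵐ[μ] B :=
      hθ.toMeasurePreserving.conservative.ae_mem_imp_frequently_image_mem hA.nullMeasurableSet
    exact absurd (measure_mono_null_ae hAB (ae_eq_empty.1 h0)) h
  · exact eventuallyEq_univ.1 h1

section RandomIteration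

variable {Ω M : Type*} {θ : Ω → Ω} {f : Ω → M → M}

theorem randIter_succ (n : ℕ) (ω : Ω) (x : M) :
    randIter θ f (n + 1) ω x = f (θ^[n] ω) (randIter θ f n ω x) :=
  rfl

theorem randIter_add (n m : ℕ) (ω : Ω) (x : M) :
    randIter θ f m (θ^[n] ω) (randIter θ f n ω x) = randIter θ f (n + m) ω x := by
  induction m with
  | zero => rfl
  | succ m ih => rw [randIter_succ, ih, ← Function.iterate_add_apply, Nat.add_comm m n]; rfl

theorem continuous_randIter [TopologicalSpace M] (hcont : ∀ ω, Continuous (f ω)) (n : ℕ) (ω : Ω) :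
    Continuous (randIter θ f n ω) := by
  induction n with
  | zero => exact continuous_id
  | succ n ih => exact (hcont _).comp ih

theorem measurable_randIter [MeasurableSpace Ω] [MeasurableSpace M] (hθ : Measurable θ)
    (hmeas : Measurable (Function.uncurry f)) (n : ℕ) (x : M) :
    Measurable fun ω => randIter θ f n ω x := by
  induction n with
  | zero => exact measurable_const
  | succ n ih => exact hmeas.comp ((hθ.iterate n).prodMk ih)

theorem exists_infDist_randIter_lt [MetricSpace M] [ProperSpace M]
    (hpara : ∀ ω, IsParacontraction (f ω))
    {C : Set M} (hC : IsClosed C) (hne : C.Nonempty) {ω : Ω}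
    (hfix : ∀ n, ∀ c ∈ C, f (θ^[n] ω) c = c) {z : M} (hz : ∃ n, f (θ^[n] ω) z ≠ z) :
    ∃ j, infDist (randIter θ f j ω z) C < infDist z C := by
  by_contra! hnot
  obtain ⟨n, hn⟩ := hz
  have hstay : ∀ j, randIter θ f j ω z = z := by
    intro j
    induction j with
    | zero => rfl
    | succ j ih =>
      have hle := hnot (j + 1)
      rw [randIter_succ, ih] at hle ⊢
      by_contra hmove
      exact hle.not_gt ((hpara _).infDist_lt hC hne (hfix j) hmove)
  have := hstay (n + 1)
  rw [randIter_succ, hstay n] at this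
  exact hn this

theorem setOf_measure_fixed_eq_one_eq_setOf_ae [MeasurableSpace Ω] {ℙ : Measure Ω}
    [IsProbabilityMeasure ℙ] [MeasurableSpace M]
    [MeasurableSingletonClass M] (hmeas : Measurable (Function.uncurry f)) :
    {x | ℙ {ω | f ω x = x} = 1} = {x | ∀ᵐ ω ∂ℙ, f ω x = x} := by
  ext x
  rw [mem_ofPred_eq, mem_ofPred_eq, ae_iff_measure_eq, measure_univ]
  exact (hmeas.of_uncurry_right (measurableSet_singleton x)).nullMeasurableSet

theorem isClosed_setOf_ae_fixed [MeasurableSpace Ω] {ℙ : Measure Ω} [MetricSpace M]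
    (hcont : ∀ ω, Continuous (f ω)) :
    IsClosed {x | ∀ᵐ ω ∂ℙ, f ω x = x} := by
  refine isClosed_of_closure_subset fun y hy => ?_
  obtain ⟨u, hu, hlim⟩ := mem_closure_iff_seq_limit.1 hy
  filter_upwards [ae_all_iff.2 hu] with ω hω
  exact tendsto_nhds_unique (((hcont ω).tendsto y).comp hlim) (by simpa [Function.comp_def, hω])

theorem ae_forall_mem_fixed [MeasurableSpace Ω] {ℙ : Measure Ω} [MetricSpace M] [SeparableSpace M]
    (hcont : ∀ ω, Continuous (f ω)) {C : Set M}
    (hC : ∀ c ∈ C, ∀ᵐ ω ∂ℙ, f ω c = c) : ∀ᵐ ω ∂ℙ, ∀ c ∈ C, f ω c = c := by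
  obtain ⟨t, htC, ht, hCt⟩ := (IsSeparable.of_separableSpace C).exists_countable_dense_subset
  filter_upwards [(ae_ball_iff ht).2 fun c hc => hC c (htC hc)] with ω hω c hc
  exact closure_minimal hω (isClosed_eq (hcont ω) continuous_id) (hCt hc)

theorem ae_forall_iterate_fixed [MeasurableSpace Ω] {ℙ : Measure Ω} [MetricSpace M]
    [SeparableSpace M] (hθ : MeasurePreserving θ ℙ ℙ)
    (hcont : ∀ ω, Continuous (f ω)) {C : Set M} (hC : ∀ c ∈ C, ∀ᵐ ω ∂ℙ, f ω c = c) :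
    ∀ᵐ ω ∂ℙ, ∀ n, ∀ c ∈ C, f (θ^[n] ω) c = c :=
  ae_all_iff.2 fun n => ae_forall_mem_fixed (fun _ => hcont _) fun c hc =>
    (hθ.iterate n).quasiMeasurePreserving.ae (hC c hc)

def orbitMoves (θ : Ω → Ω) (f : Ω → M → M) (K : Set M) : Set Ω :=
  {ω | ∀ z ∈ K, ∃ n, f (θ^[n] ω) z ≠ z}

theorem preimage_orbitMoves_subset (K : Set M) :
    θ ⁻¹' orbitMoves θ f K ⊆ orbitMoves θ f K := fun ω hω z hz => by
  obtain ⟨n, hn⟩ := hω z hz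
  exact ⟨n + 1, by rwa [Function.iterate_succ_apply]⟩

theorem measurableSet_orbitMoves [MeasurableSpace Ω] [MetricSpace M] [MeasurableSpace M]
    [OpensMeasurableSpace M]
    (hθ : Measurable θ) (hmeas : Measurable (Function.uncurry f))
    (hcont : ∀ ω, Continuous (f ω)) {K : Set M} (hK : IsCompact K) :
    MeasurableSet (orbitMoves θ f K) := by
  have : orbitMoves θ f K =
      ⋃ N : ℕ, {ω | ∀ z ∈ K, ∃ n ≤ N, 1 / ((N : ℝ) + 1) ≤ dist (f (θ^[n] ω) z) z} := by
    ext ω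
    simp only [mem_iUnion]
    constructor
    · intro hω
      exact hK.exists_one_div_le_of_forall_exists_pos (fun n => (hcont _).dist continuous_id)
        fun z hz => (hω z hz).imp fun n hn => dist_pos.2 hn
    · rintro ⟨N, hN⟩ z hz
      obtain ⟨n, -, hn⟩ := hN z hz
      exact ⟨n, dist_pos.1 (lt_of_lt_of_le (by positivity) hn)⟩
  rw [this]
  exact .iUnion fun N => measurableSet_setOf_forall_mem_exists_le
    (G := fun n ω z => dist (f (θ^[n] ω) z) z) hK.isSeparable
    (fun n z => (continuous_id.dist continuous_const).measurable.comp
      (hmeas.comp ((hθ.iterate n).prodMk measurable_const)))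
    (fun n ω => (hcont _).dist continuous_id) N _

theorem ae_mem_orbitMoves [MeasurableSpace Ω] {ℙ : Measure Ω} [IsFiniteMeasure ℙ] [MetricSpace M]
    [MeasurableSpace M] [OpensMeasurableSpace M]
    (hθ : Ergodic θ ℙ) (hmeas : Measurable (Function.uncurry f))
    (hcont : ∀ ω, Continuous (f ω)) {K : Set M} (hK : IsCompact K)
    (hKfix : ∀ z ∈ K, ¬ ∀ᵐ ω ∂ℙ, f ω z = z) : ∀ᵐ ω ∂ℙ, ω ∈ orbitMoves θ f K := by
  refine hK.induction_on (p := fun t => ∀ᵐ ω ∂ℙ, ω ∈ orbitMoves θ f t)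
    (.of_forall fun ω z hz => absurd hz (notMem_empty z))
    (fun s t hst ht => ht.mono fun ω hω z hz => hω z (hst hz))
    (fun s t hs ht => (hs.and ht).mono fun ω hω z hz => hz.elim (hω.1 z) (hω.2 z))
    fun x hx => ?_
  by_contra hloc
  refine hKfix x hx ?_
  -- by ergodicity, on every small compact neighbourhood of `x` some point is fixed along the orbit
  have hnear : ∀ k : ℕ, ∀ᵐ ω ∂ℙ, ∃ z ∈ closedBall x (1 / ((k : ℝ) + 1)), f ω z = z := by
    intro k
    set t := K ∩ closedBall x (1 / ((k : ℝ) + 1))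
    have ht : IsCompact t := hK.inter_right isClosed_closedBall
    rcases hθ.ae_empty_or_univ_of_preimage_ae_le
      (measurableSet_orbitMoves hθ.measurable hmeas hcont ht).nullMeasurableSet
      (preimage_orbitMoves_subset _).eventuallyLE with h0 | h1
    · filter_upwards [measure_eq_zero_iff_ae_notMem.1 (ae_eq_empty.1 h0)] with ω hω
      simp only [orbitMoves, mem_ofPred_eq, not_forall, not_exists, not_not] at hω
      obtain ⟨z, hz, hfix⟩ := hω
      exact ⟨z, hz.2, hfix 0⟩
    · exact absurd ⟨t, inter_mem_nhdsWithin K (closedBall_mem_nhds x (by positivity)),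
        eventuallyEq_univ.1 h1⟩ hloc
  filter_upwards [ae_all_iff.2 hnear] with ω hω
  refine (isClosed_eq (hcont ω) continuous_id).closure_subset
    (Metric.mem_closure_iff.2 fun ε hε => ?_)
  obtain ⟨k, hk⟩ := exists_nat_one_div_lt hε
  obtain ⟨z, hz, hfz⟩ := hω k
  exact ⟨z, hfz, (mem_closedBall'.1 hz).trans_lt hk⟩

theorem exists_ae_frequently_uniform_descent [MeasurableSpace Ω] {ℙ : Measure Ω}
    [IsProbabilityMeasure ℙ] [MetricSpace M] [ProperSpace M]
    [MeasurableSpace M] [OpensMeasurableSpace M] (hθ : Ergodic θ ℙ)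
    (hmeas : Measurable (Function.uncurry f)) (hcont : ∀ ω, Continuous (f ω))
    (hpara : ∀ ω, IsParacontraction (f ω)) {C : Set M} (hC : IsClosed C) (hne : C.Nonempty)
    (hfix : ∀ᵐ ω ∂ℙ, ∀ n, ∀ c ∈ C, f (θ^[n] ω) c = c) {S : Set M} (hS : IsCompact S)
    (hSfix : ∀ z ∈ S, ¬ ∀ᵐ ω ∂ℙ, f ω z = z) :
    ∃ N : ℕ, ∀ᵐ ω ∂ℙ, ∃ᶠ n in atTop, ∀ z ∈ S, ∃ j ≤ N,
      1 / ((N : ℝ) + 1) ≤ infDist z C - infDist (randIter θ f j (θ^[n] ω) z) C := by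
  let A : ℕ → Set Ω := fun N =>
    {ω | ∀ z ∈ S, ∃ j ≤ N, 1 / ((N : ℝ) + 1) ≤ infDist z C - infDist (randIter θ f j ω z) C}
  have hA : ∀ N, MeasurableSet (A N) := fun N => measurableSet_setOf_forall_mem_exists_le
    (G := fun j ω z => infDist z C - infDist (randIter θ f j ω z) C) hS.isSeparable
    (fun j z => measurable_const.sub
      ((continuous_infDist_pt C).measurable.comp (measurable_randIter hθ.measurable hmeas j z)))
    (fun j ω => (continuous_infDist_pt C).sub
      ((continuous_infDist_pt C).comp (continuous_randIter hcont j ω))) N _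
  have hcover : ∀ᵐ ω ∂ℙ, ∃ N, ω ∈ A N := by
    filter_upwards [hfix, ae_mem_orbitMoves hθ hmeas hcont hS hSfix] with ω hω hmove
    exact hS.exists_one_div_le_of_forall_exists_pos
      (fun j => (continuous_infDist_pt C).sub
        ((continuous_infDist_pt C).comp (continuous_randIter hcont j ω)))
      fun z hz => (exists_infDist_randIter_lt hpara hC hne hω (hmove z hz)).imp fun _ => sub_pos.2
  obtain ⟨N, hN⟩ : ∃ N, ℙ (A N) ≠ 0 := by
    by_contra! hnull
    obtain ⟨ω, hω, N, hN⟩ :=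
      ((ae_all_iff.2 fun N => measure_eq_zero_iff_ae_notMem.1 (hnull N)).and hcover).exists
    exact hω N hN
  exact ⟨N, hθ.ae_frequently_mem (hA N) hN⟩

end RandomIteration

theorem random_iteration_paracontractions_converges_general
    {Ω : Type*} [MeasurableSpace Ω] (ℙ : Measure Ω) [IsProbabilityMeasure ℙ]
    (θ : Ω → Ω) (hθ : Ergodic θ ℙ)
    {M : Type*} [MetricSpace M] [ProperSpace M]
    [MeasurableSpace M] [BorelSpace M]
    (f : Ω → M → M)
    (hmeas : Measurable (Function.uncurry f))
    (hcont : ∀ ω, Continuous (f ω))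
    (hpara : ∀ ω, ∀ x y : M, f ω x = x → f ω y ≠ y → dist (f ω y) x < dist y x)
    (C : Set M) (hCdef : C = {x : M | ℙ {ω | f ω x = x} = 1})
    (hCne : C.Nonempty) :
    ∀ x : M, ∀ᵐ ω ∂ℙ, ∃ c ∈ C,
      Tendsto (fun n => randIter θ f n ω x) atTop (nhds c) := by
  intro x
  have hCae : C = {z | ∀ᵐ ω ∂ℙ, f ω z = z} :=
    hCdef.trans (setOf_measure_fixed_eq_one_eq_setOf_ae hmeas)
  have hC : IsClosed C := hCae ▸ isClosed_setOf_ae_fixed hcont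
  have hfix := ae_forall_iterate_fixed hθ.toMeasurePreserving hcont fun c hc => hCae.subset hc
  obtain ⟨c₀, hc₀⟩ := hCne
  let S : ℕ → Set M := fun q => closedBall c₀ (dist x c₀) ∩ {z | 1 / ((q : ℝ) + 1) ≤ infDist z C}
  have hS : ∀ q, IsCompact (S q) := fun q => (isCompact_closedBall _ _).inter_right
    (isClosed_le continuous_const (continuous_infDist_pt C))
  have hSC : ∀ q, ∀ z ∈ S q, ¬ ∀ᵐ ω ∂ℙ, f ω z = z := fun q z hz hzC =>
    (hz.2.trans_eq (infDist_zero_of_mem (hCae.superset hzC))).not_gt (by positivity)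
  choose N hN using fun q => exists_ae_frequently_uniform_descent hθ hmeas hcont hpara hC
    ⟨c₀, hc₀⟩ hfix (hS q) (hSC q)
  filter_upwards [hfix, ae_all_iff.2 hN] with ω hω hrec
  have hfejer : ∀ c ∈ C, Antitone fun n => dist (randIter θ f n ω x) c := fun c hc =>
    antitone_nat_of_succ_le fun n => IsParacontraction.dist_le (hpara _) (hω n c hc) _
  refine exists_tendsto_of_antitone_dist hC ⟨c₀, hc₀⟩ hfejer fun ε hε => ?_
  obtain ⟨q, hq⟩ := exists_nat_one_div_lt hε
  by_contra! hfar
  refine (antitone_infDist_of_antitone_dist ⟨c₀, hc₀⟩ hfejer).not_frequently_exists_le_sub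
    ⟨0, ?_⟩ (by positivity : (0 : ℝ) < 1 / ((N q : ℝ) + 1)) ((hrec q).mono fun n hn => ?_)
  · rintro _ ⟨n, rfl⟩
    exact infDist_nonneg
  · obtain ⟨j, -, hj⟩ :=
      hn _ ⟨mem_closedBall.2 (hfejer c₀ hc₀ (Nat.zero_le n)), hq.le.trans (hfar n)⟩
    exact ⟨n + j, by rw [← randIter_add]; linarith⟩

/-- Main theorem: a random iteration of paracontractions driven by an ergodic
measure-preserving dynamical system converges a.s. to a point of the set C of
almost surely common fixed points, provided C is non-empty. -/
theorem random_iteration_paracontractions_converges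
    {Ω : Type*} [MeasurableSpace Ω] (ℙ : Measure Ω) [IsProbabilityMeasure ℙ]
    (θ : Ω → Ω) (hθ : Ergodic θ ℙ)
    {M : Type*} [MetricSpace M] [TopologicalSpace.SeparableSpace M] [ProperSpace M]
    [MeasurableSpace M] [BorelSpace M]
    (f : Ω → M → M)
    (hmeas : Measurable (Function.uncurry f))
    (hcont : ∀ ω, Continuous (f ω))
    (hpara : ∀ ω, ∀ x y : M, f ω x = x → f ω y ≠ y → dist (f ω y) x < dist y x)
    (C : Set M) (hCdef : C = {x : M | ℙ {ω | f ω x = x} = 1})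
    (hCne : C.Nonempty) :
    ∀ x : M, ∀ᵐ ω ∂ℙ, ∃ c ∈ C,
      Tendsto (fun n => randIter θ f n ω x) atTop (nhds c) :=
  random_iteration_paracontractions_converges_general ℙ θ hθ f hmeas hcont hpara C hCdef hCne
end
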